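/- The growth function of the monoid S′ generated by g₀ and g₁ satisfies Γ′(n) = 3n for all n ≥ 1 (and Γ′(0) = 1): the elements of length at most n are exactly g₁^p for 0 ≤ p ≤ n, g₁^p ∘ g₀ for 0 ≤ p ≤ n−1, and g₁^p ∘ g₀ ∘ g₁ for 0 ≤ p ≤ n−2. -/

import Mathlib

/- On a word `w` with `w 0 ≠ 0`, `g₀` resets `w 0` to `1` and `g₁` increments it. Since
`g₀ u 0 = 1` and `g₁ u 0 ≠ 0` for every `u`, all letters but the first of a composition act on
position `0` only, which gives `g₀ ∘ g₀ = g₀`, `g₀ ∘ g₁^p ∘ g₀ = g₀` and `g₀ ∘ g₁^(p+1) = g₀ ∘ g₁`.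
So every element of `S′` is `g₁^p ∘ t` with `t ∈ {id, g₀, g₀ ∘ g₁}`, of length at most `p + |t|`.
These normal forms are pairwise distinct: the constant words `1` and `2` recover `p` and whether
`t = id`, and the word `(0, 1, 0, 0, …)` separates `g₀` from `g₀ ∘ g₁`. -/

/- The automaton transformation `g₀` of the limit automaton `I′` acting on
infinite words over a countably infinite alphabet, `u : ℕ → ℕ`: if `u` is
identically `0` it returns the constant sequence `1`; otherwise, with `j` the
least index where `u j ≠ 0`, positions `≤ j` become `1` and the rest are kept. -/
open Classical in
noncomputable def g0 (u : ℕ → ℕ) : ℕ → ℕ :=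
  if h : ∃ j, u j ≠ 0 then
    fun i => if i ≤ Nat.find h then 1 else u i
  else fun _ => 1

/- The automaton transformation `g₁` of the limit automaton `I′`: if `u` is
identically `0` it returns the constant sequence `1`; otherwise, with `j` the
least index where `u j ≠ 0`, positions `< j` become `1`, position `j` is
incremented, and the rest are kept. -/
open Classical in
noncomputable def g1 (u : ℕ → ℕ) : ℕ → ℕ :=
  if h : ∃ j, u j ≠ 0 then
    fun i => if i < Nat.find h then 1 else if i = Nat.find h then u i + 1 else u i
  else fun _ => 1

/- The automaton transformation monoid `S′` generated by `g₀` and `g₁`. -/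
def SP : Set ((ℕ → ℕ) → ℕ → ℕ) :=
  {s | ∃ L : List ((ℕ → ℕ) → ℕ → ℕ),
    (∀ g ∈ L, g = g0 ∨ g = g1) ∧ L.foldr (· ∘ ·) id = s}

/- The length `ℓ′(s)`: the least `n` such that `s` is a composition of `n`
maps, each equal to `g₀` or `g₁` (so `ℓ′(id) = 0`). -/
noncomputable def lenP (s : (ℕ → ℕ) → ℕ → ℕ) : ℕ :=
  sInf {n | ∃ L : List ((ℕ → ℕ) → ℕ → ℕ),
    L.length = n ∧ (∀ g ∈ L, g = g0 ∨ g = g1) ∧ L.foldr (· ∘ ·) id = s}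

/- The growth function `Γ′(n) = card {s ∈ S′ : ℓ′(s) ≤ n}`. -/
noncomputable def GammaP (n : ℕ) : ℕ :=
  Set.ncard {s | s ∈ SP ∧ lenP s ≤ n}

open Function

lemma g0_eq_of_first_nonzero {w : ℕ → ℕ} {j : ℕ} (hj : w j ≠ 0) (hlt : ∀ i < j, w i = 0) :
    g0 w = fun i => if i ≤ j then 1 else w i := by
  have h : ∃ j, w j ≠ 0 := ⟨j, hj⟩
  have hfind : Nat.find h = j :=
    (Nat.find_eq_iff h).2 ⟨hj, fun i hi => not_not.2 (hlt i hi)⟩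
  simp only [g0, dif_pos h, hfind]

lemma g1_eq_of_first_nonzero {w : ℕ → ℕ} {j : ℕ} (hj : w j ≠ 0) (hlt : ∀ i < j, w i = 0) :
    g1 w = fun i => if i < j then 1 else if i = j then w i + 1 else w i := by
  have h : ∃ j, w j ≠ 0 := ⟨j, hj⟩
  have hfind : Nat.find h = j :=
    (Nat.find_eq_iff h).2 ⟨hj, fun i hi => not_not.2 (hlt i hi)⟩
  simp only [g1, dif_pos h, hfind]

lemma g0_of_head_ne_zero {w : ℕ → ℕ} (hw : w 0 ≠ 0) : g0 w = update w 0 1 := by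
  rw [g0_eq_of_first_nonzero hw (by simp)]
  ext i
  rcases eq_or_ne i 0 with rfl | hi <;> simp [*]

lemma g1_of_head_ne_zero {w : ℕ → ℕ} (hw : w 0 ≠ 0) : g1 w = update w 0 (w 0 + 1) := by
  rw [g1_eq_of_first_nonzero hw (by simp)]
  ext i
  rcases eq_or_ne i 0 with rfl | hi <;> simp [*]

lemma iterate_g1_of_head_ne_zero {w : ℕ → ℕ} (hw : w 0 ≠ 0) (p : ℕ) :
    g1^[p] w = update w 0 (w 0 + p) := by
  induction p with
  | zero => simp
  | succ p ih =>
    rw [iterate_succ_apply', ih, g1_of_head_ne_zero (by simp [hw])]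
    simp [add_assoc]

lemma g0_apply_zero (w : ℕ → ℕ) : g0 w 0 = 1 := by
  unfold g0; split_ifs <;> simp

lemma g1_apply_zero_ne_zero (w : ℕ → ℕ) : g1 w 0 ≠ 0 := by
  unfold g1; split_ifs with h
  · dsimp only; split_ifs <;> omega
  · simp

lemma g0_iterate_g1_of_head_ne_zero {w : ℕ → ℕ} (hw : w 0 ≠ 0) (p : ℕ) :
    g0 (g1^[p] w) = g0 w := by
  rw [iterate_g1_of_head_ne_zero hw, g0_of_head_ne_zero (by simp [hw]), g0_of_head_ne_zero hw,
    update_idem]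

lemma g0_g0 (w : ℕ → ℕ) : g0 (g0 w) = g0 w := by
  rw [g0_of_head_ne_zero (by simp [g0_apply_zero]), ← g0_apply_zero w, update_eq_self]

noncomputable def normalFormTail : Fin 3 → (ℕ → ℕ) → ℕ → ℕ := ![id, g0, g0 ∘ g1]

/- `normalForm ⟨i, p⟩` is a composition of `p + i` generators. -/
noncomputable def normalForm (x : Σ _ : Fin 3, ℕ) : (ℕ → ℕ) → ℕ → ℕ :=
  g1^[x.2] ∘ normalFormTail x.1

lemma g1_comp_normalForm (i : Fin 3) (p : ℕ) :
    g1 ∘ normalForm ⟨i, p⟩ = normalForm ⟨i, p + 1⟩ := by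
  simp only [normalForm, iterate_succ', comp_assoc]

lemma exists_normalForm_eq_g0_comp (x : Σ _ : Fin 3, ℕ) :
    ∃ y : Σ _ : Fin 3, ℕ, y.2 + y.1 ≤ x.2 + x.1 + 1 ∧ normalForm y = g0 ∘ normalForm x := by
  obtain ⟨i, p⟩ := x
  fin_cases i
  · rcases p with _ | p
    · exact ⟨⟨1, 0⟩, by simp, rfl⟩
    · refine ⟨⟨2, 0⟩, by simp, funext fun w => ?_⟩
      simp [normalForm, normalFormTail, g0_iterate_g1_of_head_ne_zero (g1_apply_zero_ne_zero w)]
  · refine ⟨⟨1, 0⟩, by simp, funext fun w => ?_⟩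
    simp [normalForm, normalFormTail, g0_iterate_g1_of_head_ne_zero, g0_apply_zero, g0_g0]
  · refine ⟨⟨2, 0⟩, by simp, funext fun w => ?_⟩
    simp [normalForm, normalFormTail, g0_iterate_g1_of_head_ne_zero, g0_apply_zero, g0_g0]

lemma exists_normalForm_eq_foldr (L : List ((ℕ → ℕ) → ℕ → ℕ)) (hL : ∀ g ∈ L, g = g0 ∨ g = g1) :
    ∃ x : Σ _ : Fin 3, ℕ, x.2 + x.1 ≤ L.length ∧ normalForm x = L.foldr (· ∘ ·) id := by
  induction L with
  | nil => exact ⟨⟨0, 0⟩, by simp, rfl⟩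
  | cons g L ih =>
    obtain ⟨⟨i, p⟩, hlen, hx⟩ := ih fun g hg => hL g (List.mem_cons_of_mem _ hg)
    rw [List.foldr_cons, ← hx, List.length_cons]
    rcases hL g List.mem_cons_self with rfl | rfl
    · obtain ⟨y, hy, hyx⟩ := exists_normalForm_eq_g0_comp ⟨i, p⟩
      exact ⟨y, by omega, hyx⟩
    · exact ⟨⟨i, p + 1⟩, by simp only at hlen ⊢; omega, (g1_comp_normalForm i p).symm⟩

lemma exists_list_foldr_eq_normalForm (x : Σ _ : Fin 3, ℕ) :
    ∃ L : List ((ℕ → ℕ) → ℕ → ℕ), (∀ g ∈ L, g = g0 ∨ g = g1) ∧ L.length = x.2 + x.1 ∧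
      L.foldr (· ∘ ·) id = normalForm x := by
  obtain ⟨i, p⟩ := x
  induction p with
  | zero =>
    fin_cases i
    · exact ⟨[], by simp, rfl, rfl⟩
    · exact ⟨[g0], by simp, rfl, rfl⟩
    · exact ⟨[g0, g1], by simp, rfl, rfl⟩
  | succ p ih =>
    obtain ⟨L, hL, hlen, hfoldr⟩ := ih
    refine ⟨g1 :: L, by simpa using hL, by simp only [List.length_cons, hlen]; omega, ?_⟩
    rw [List.foldr_cons, hfoldr, g1_comp_normalForm]

lemma mem_SP_and_lenP_le_iff {s : (ℕ → ℕ) → ℕ → ℕ} {n : ℕ} :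
    s ∈ SP ∧ lenP s ≤ n ↔ ∃ L : List ((ℕ → ℕ) → ℕ → ℕ),
      (∀ g ∈ L, g = g0 ∨ g = g1) ∧ L.length ≤ n ∧ L.foldr (· ∘ ·) id = s := by
  constructor
  · rintro ⟨⟨L, hL, hs⟩, hlen⟩
    obtain ⟨M, hM, hgen, hMs⟩ : lenP s ∈ _ := Nat.sInf_mem ⟨L.length, L, rfl, hL, hs⟩
    exact ⟨M, hgen, hM ▸ hlen, hMs⟩
  · rintro ⟨L, hL, hlen, hs⟩
    exact ⟨⟨L, hL, hs⟩, le_trans (Nat.sInf_le ⟨L, rfl, hL, hs⟩) hlen⟩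

lemma setOf_mem_SP_and_lenP_le (n : ℕ) :
    {s | s ∈ SP ∧ lenP s ≤ n} = normalForm '' {x | x.2 + x.1 ≤ n} := by
  ext s
  simp only [Set.mem_ofPred_eq, mem_SP_and_lenP_le_iff, Set.mem_image]
  constructor
  · rintro ⟨L, hL, hlen, rfl⟩
    obtain ⟨x, hx, hxL⟩ := exists_normalForm_eq_foldr L hL
    exact ⟨x, hx.trans hlen, hxL⟩
  · rintro ⟨x, hx, rfl⟩
    obtain ⟨L, hL, hlen, hLx⟩ := exists_list_foldr_eq_normalForm x
    exact ⟨L, hL, hlen ▸ hx, hLx⟩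

lemma normalForm_const_apply_zero {c : ℕ} (hc : c ≠ 0) (x : Σ _ : Fin 3, ℕ) :
    normalForm x (fun _ => c) 0 = (if x.1 = 0 then c else 1) + x.2 := by
  obtain ⟨i, p⟩ := x
  fin_cases i <;>
    simp [normalForm, normalFormTail, iterate_g1_of_head_ne_zero, g0_of_head_ne_zero,
      g1_of_head_ne_zero, hc]

lemma normalForm_single_apply_one {x : Σ _ : Fin 3, ℕ} (hx : x.1 ≠ 0) :
    normalForm x (Pi.single 1 1) 1 = x.1 := by
  obtain ⟨i, p⟩ := x
  have hlt : ∀ k < 1, (Pi.single 1 1 : ℕ → ℕ) k = 0 := by simp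
  have h0 := g0_eq_of_first_nonzero (by simp) hlt
  have h1 := g1_eq_of_first_nonzero (by simp) hlt
  fin_cases i
  · simp at hx
  · simp [normalForm, normalFormTail, iterate_g1_of_head_ne_zero, h0]
  · simp [normalForm, normalFormTail, iterate_g1_of_head_ne_zero, g0_of_head_ne_zero, h1]

lemma normalForm_injective : Injective normalForm := by
  rintro ⟨i, p⟩ ⟨j, q⟩ h
  have h1 := normalForm_const_apply_zero one_ne_zero ⟨i, p⟩
  have h2 := normalForm_const_apply_zero two_ne_zero ⟨i, p⟩
  rw [h, normalForm_const_apply_zero one_ne_zero] at h1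
  rw [h, normalForm_const_apply_zero two_ne_zero] at h2
  simp only [ite_self] at h1
  obtain rfl : p = q := by omega
  obtain rfl : i = j := by
    by_cases hi : i = 0 <;> by_cases hj : j = 0
    · rw [hi, hj]
    · simp [hi, hj] at h2
    · simp [hi, hj] at h2
    · have hsingle := normalForm_single_apply_one (x := ⟨i, p⟩) hi
      rw [h, normalForm_single_apply_one hj] at hsingle
      exact Fin.ext hsingle.symm
  rfl

lemma ncard_setOf_snd_add_fst_le (n : ℕ) :
    {x : Σ _ : Fin 3, ℕ | x.2 + x.1 ≤ n}.ncard = (n + 1) + n + (n - 1) := by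
  have h : {x : Σ _ : Fin 3, ℕ | x.2 + x.1 ≤ n} =
      ↑((Finset.univ : Finset (Fin 3)).sigma fun i => Finset.range (n + 1 - i)) := by
    ext ⟨i, p⟩
    simp only [Set.mem_ofPred_eq, Finset.coe_sigma, Set.mem_sigma_iff, Finset.coe_univ,
      Set.mem_univ, Finset.coe_range, Set.mem_Iio, true_and]
    omega
  rw [h, Set.ncard_coe_finset, Finset.card_sigma, Fin.sum_univ_three]
  simp

lemma GammaP_eq (n : ℕ) : GammaP n = (n + 1) + n + (n - 1) := by
  rw [GammaP, setOf_mem_SP_and_lenP_le, Set.ncard_image_of_injective _ normalForm_injective,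
    ncard_setOf_snd_add_fst_le]

lemma image_normalForm_eq (n : ℕ) :
    normalForm '' {x | x.2 + x.1 ≤ n} =
      {s | ∃ p : ℕ, (p ≤ n ∧ s = g1^[p]) ∨ (p + 1 ≤ n ∧ s = g1^[p] ∘ g0) ∨
        (p + 2 ≤ n ∧ s = g1^[p] ∘ g0 ∘ g1)} := by
  ext s
  simp [normalForm, normalFormTail, Sigma.exists, Fin.exists_fin_succ, exists_or, eq_comm (a := s)]

/-- `Γ′(0) = 1` and `Γ′(n) = 3n` for `n ≥ 1`: the elements of length at most
`n` are exactly `g₁^p` (`0 ≤ p ≤ n`), `g₁^p ∘ g₀` (`0 ≤ p ≤ n−1`) and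
`g₁^p ∘ g₀ ∘ g₁` (`0 ≤ p ≤ n−2`). -/
theorem GammaP_eq_three_n :
    GammaP 0 = 1 ∧
    ∀ n : ℕ, 1 ≤ n → GammaP n = 3 * n ∧
      {s | s ∈ SP ∧ lenP s ≤ n} =
        {s | ∃ p : ℕ, (p ≤ n ∧ s = g1^[p]) ∨
          (p + 1 ≤ n ∧ s = g1^[p] ∘ g0) ∨
          (p + 2 ≤ n ∧ s = g1^[p] ∘ g0 ∘ g1)} := by
  refine ⟨by simp [GammaP_eq], fun n hn => ⟨by rw [GammaP_eq]; omega, ?_⟩⟩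
  rw [setOf_mem_SP_and_lenP_le, image_normalForm_eq]
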